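/- arXiv:2211.04637 — 3 statements merged into one kernel-verified Lean document; each statement's English description precedes it below -/
import Mathlib

section
/- Let w, d, M be positive integers with d even, d < 2w, and define s(C) = Σ_{pairs} ⟨c_m, c_m'⟩^l for a code C of M weight-w binary codewords of length n, where l = ⌊ log(C(M,2)) / log(1 + 2/(2w-d)) + 1 ⌋. If there exists a code with minimum distance at least d, then any code C* minimizing s(C) over all codes of M distinct weight-w codewords has minimum distance at least d. -/
open Finset

/-- A code of `M` distinct binary codewords of length `n`, each of Hamming weight `w`. -/
def IsCode (n w M : ℕ) (c : Fin M → Fin n → ℤ) : Prop :=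
  Function.Injective c ∧ (∀ m i, c m i = 0 ∨ c m i = 1) ∧ ∀ m, ∑ i, c m i = (w : ℤ)

/-- The objective `s(C) = ∑_{m < m'} ⟨c m, c m'⟩^l`. -/
def sObj (n M l : ℕ) (c : Fin M → Fin n → ℤ) : ℤ :=
  ∑ p ∈ univ.filter (fun p : Fin M × Fin M => p.1 < p.2), (∑ i, c p.1 i * c p.2 i) ^ l

theorem card_filter_lt_pairs (M : ℕ) :
    (univ.filter (fun p : Fin M × Fin M => p.1 < p.2)).card = M.choose 2 := by
  have hswap : (univ.filter (fun p : Fin M × Fin M => p.1 < p.2)).card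
      = (univ.filter (fun p : Fin M × Fin M => p.2 < p.1)).card := by
    apply Finset.card_bij' (fun p _ => p.swap) (fun p _ => p.swap) <;>
      simp [Finset.mem_filter]
  have hunion : (univ.filter (fun p : Fin M × Fin M => p.1 < p.2))
      ∪ (univ.filter (fun p : Fin M × Fin M => p.2 < p.1)) = (univ : Finset (Fin M)).offDiag := by
    ext ⟨a, b⟩
    simp [Finset.mem_offDiag, lt_or_lt_iff_ne, ne_comm]
  have hdisj : Disjoint (univ.filter (fun p : Fin M × Fin M => p.1 < p.2))
      (univ.filter (fun p : Fin M × Fin M => p.2 < p.1)) := by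
    simp [Finset.disjoint_filter]
    intro a b h; omega
  have h2 := Finset.card_union_of_disjoint hdisj
  rw [hunion, Finset.offDiag_card, ← hswap] at h2
  simp at h2
  have hmul : M * (M - 1) = M * M - M := by
    cases M with
    | zero => simp
    | succ m => simp [Nat.mul_succ, Nat.succ_sub_one]
  rw [Nat.choose_two_right]
  omega

theorem inner_nonneg {n w M : ℕ} {c : Fin M → Fin n → ℤ} (hc : IsCode n w M c) (m m' : Fin M) :
    0 ≤ ∑ i, c m i * c m' i :=
  Finset.sum_nonneg fun i _ => by
    rcases hc.2.1 m i with h | h <;> rcases hc.2.1 m' i with h' | h' <;> simp [h, h']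

theorem inner_card {n w M : ℕ} {c : Fin M → Fin n → ℤ} (hc : IsCode n w M c) (m m' : Fin M) :
    2 * (∑ i, c m i * c m' i)
      + ((univ.filter (fun i => c m i ≠ c m' i)).card : ℤ) = 2 * w := by
  have hcard : ((univ.filter (fun i => c m i ≠ c m' i)).card : ℤ)
      = ∑ i, (c m i - c m' i) ^ 2 := by
    rw [Finset.card_filter]
    push_cast
    refine Finset.sum_congr rfl fun i _ => ?_
    rcases hc.2.1 m i with h | h <;> rcases hc.2.1 m' i with h' | h' <;> simp [h, h']
  rw [hcard, Finset.mul_sum, ← Finset.sum_add_distrib]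
  have : ∀ i ∈ (univ : Finset (Fin n)),
      2 * (c m i * c m' i) + (c m i - c m' i) ^ 2 = c m i + c m' i := by
    intro i _
    rcases hc.2.1 m i with h | h <;> rcases hc.2.1 m' i with h' | h' <;> rw [h, h'] <;> ring
  rw [Finset.sum_congr rfl this, Finset.sum_add_distrib, hc.2.2 m, hc.2.2 m']
  ring

theorem key_ineq (t N l : ℕ) (ht : 1 ≤ t) (hN : 1 ≤ N)
    (hl : (l : ℤ) = ⌊Real.log N / Real.log (1 + 1 / (t : ℝ)) + 1⌋) :
    (N : ℤ) * (t : ℤ) ^ l < ((t : ℤ) + 1) ^ l := by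
  set x : ℝ := (t : ℝ) with hxdef
  have hx : 1 ≤ x := by rw [hxdef]; exact_mod_cast ht
  have hx0 : 0 < x := by linarith
  have hb : 1 < 1 + 1 / x := by
    have : 0 < 1 / x := by positivity
    linarith
  have hlogb : 0 < Real.log (1 + 1 / x) := Real.log_pos hb
  set y := Real.log N / Real.log (1 + 1 / x) with hydef
  have hfloor : y < (l : ℝ) := by
    have h1 : (l : ℝ) = (⌊y + 1⌋ : ℤ) := by exact_mod_cast hl
    rw [show y + 1 = y + (1 : ℤ) by push_cast; ring, Int.floor_add_intCast] at h1
    push_cast at h1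
    rw [h1]
    exact Int.lt_floor_add_one y
  have hlog : Real.log N < l * Real.log (1 + 1 / x) := by
    rw [hydef, div_lt_iff₀ hlogb] at hfloor
    exact hfloor
  have hNpos : (0 : ℝ) < N := by exact_mod_cast hN
  have hNlt : (N : ℝ) < (1 + 1 / x) ^ l := by
    rw [← Real.log_lt_log_iff hNpos (by positivity), Real.log_pow]
    exact hlog
  have hfin : (N : ℝ) * x ^ l < (x + 1) ^ l := by
    have h1 : (N : ℝ) * x ^ l < (1 + 1 / x) ^ l * x ^ l :=
      mul_lt_mul_of_pos_right hNlt (by positivity)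
    have h2 : (1 + 1 / x) ^ l * x ^ l = (x + 1) ^ l := by
      rw [← mul_pow]
      congr 1
      field_simp
    linarith [h1, h2.le, h2.ge]
  rw [hxdef] at hfin
  exact_mod_cast hfin

/-- With `l = ⌊log C(M,2) / log (1 + 2/(2w - d)) + 1⌋`, if some code of `M` weight-`w`
codewords has minimum distance at least `d`, then any minimizer `cstar` of `s` over all such
codes has minimum distance at least `d`. -/
theorem minimizer_has_min_distance (n w M d : ℕ) (hw : 0 < w) (hd : 0 < d) (hde : Even d)
    (hdw : d < 2 * w) (l : ℕ)
    (hl : (l : ℤ) = ⌊Real.log (M.choose 2) / Real.log (1 + 2 / (2 * (w : ℝ) - (d : ℝ))) + 1⌋)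
    (hex : ∃ c : Fin M → Fin n → ℤ, IsCode n w M c ∧
      ∀ m m', m ≠ m' → d ≤ (univ.filter (fun i => c m i ≠ c m' i)).card)
    (cstar : Fin M → Fin n → ℤ) (hstar : IsCode n w M cstar)
    (hmin : ∀ c : Fin M → Fin n → ℤ, IsCode n w M c → sObj n M l cstar ≤ sObj n M l c) :
    ∀ m m', m ≠ m' → d ≤ (univ.filter (fun i => cstar m i ≠ cstar m' i)).card := by
  intro m m' hne
  by_contra hcon
  push_neg at hcon
  obtain ⟨c, hc, hdist⟩ := hex
  -- basic numerology
  obtain ⟨k, hk⟩ := hde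
  have hM : 1 < M := by
    rcases m with ⟨a, ha⟩; rcases m' with ⟨b, hb⟩
    simp only [ne_eq, Fin.mk.injEq] at hne
    omega
  set N := M.choose 2 with hNdef
  have hN : 1 ≤ N := Nat.choose_pos (by omega)
  set t := w - d / 2 with htdef
  have hkd : d / 2 = k := by omega
  have ht : 1 ≤ t := by omega
  have hwt : w = t + k := by omega
  -- rewrite hl
  have htne : ((t : ℝ)) ≠ 0 := by
    have : (1 : ℝ) ≤ (t : ℝ) := by exact_mod_cast ht
    linarith
  have hbase : 1 + 2 / (2 * (w : ℝ) - (d : ℝ)) = 1 + 1 / (t : ℝ) := by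
    have h1 : 2 * (w : ℝ) - (d : ℝ) = 2 * (t : ℝ) := by
      have hw' : (w : ℝ) = (t : ℝ) + (k : ℝ) := by exact_mod_cast hwt
      have hd' : (d : ℝ) = (k : ℝ) + (k : ℝ) := by exact_mod_cast hk
      rw [hw', hd']; ring
    rw [h1]
    congr 1
    field_simp
  rw [hbase] at hl
  have hkey : (N : ℤ) * (t : ℤ) ^ l < ((t : ℤ) + 1) ^ l := key_ineq t N l ht hN hl
  -- the good code has small objective
  have hgood : sObj n M l c ≤ (N : ℤ) * (t : ℤ) ^ l := by
    have hbound : ∀ p ∈ univ.filter (fun p : Fin M × Fin M => p.1 < p.2),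
        (∑ i, c p.1 i * c p.2 i) ^ l ≤ (t : ℤ) ^ l := by
      intro p hp
      simp only [Finset.mem_filter] at hp
      have hne' : p.1 ≠ p.2 := ne_of_lt hp.2
      have hcard := hdist p.1 p.2 hne'
      have hic := inner_card hc p.1 p.2
      have hinner : ∑ i, c p.1 i * c p.2 i ≤ (t : ℤ) := by
        have : (d : ℤ) ≤ ((univ.filter (fun i => c p.1 i ≠ c p.2 i)).card : ℤ) := by
          exact_mod_cast hcard
        have hd' : (d : ℤ) = (k : ℤ) + (k : ℤ) := by exact_mod_cast hk
        have hw' : (w : ℤ) = (t : ℤ) + (k : ℤ) := by exact_mod_cast hwt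
        omega
      exact pow_le_pow_left₀ (inner_nonneg hc p.1 p.2) hinner l
    calc sObj n M l c ≤ (univ.filter (fun p : Fin M × Fin M => p.1 < p.2)).card • (t : ℤ) ^ l :=
          Finset.sum_le_card_nsmul _ _ _ hbound
      _ = (N : ℤ) * (t : ℤ) ^ l := by
          rw [card_filter_lt_pairs, nsmul_eq_mul, hNdef]
  -- cstar has a bad pair, so large objective
  -- first normalize to an ordered pair
  have hsymm : (univ.filter (fun i => cstar m' i ≠ cstar m i)).card
      = (univ.filter (fun i => cstar m i ≠ cstar m' i)).card := by
    congr 1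
    apply Finset.filter_congr
    intro i _
    simp [ne_comm]
  obtain ⟨m1, m2, hlt, hcard⟩ : ∃ m1 m2 : Fin M, m1 < m2 ∧
      (univ.filter (fun i => cstar m1 i ≠ cstar m2 i)).card < d := by
    rcases lt_trichotomy m m' with h | h | h
    · exact ⟨m, m', h, hcon⟩
    · exact absurd h hne
    · exact ⟨m', m, h, by rw [hsymm]; exact hcon⟩
  have hinner2 : (t : ℤ) + 1 ≤ ∑ i, cstar m1 i * cstar m2 i := by
    have hic := inner_card hstar m1 m2
    have hcc : ((univ.filter (fun i => cstar m1 i ≠ cstar m2 i)).card : ℤ) < (d : ℤ) := by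
      exact_mod_cast hcard
    have hd' : (d : ℤ) = (k : ℤ) + (k : ℤ) := by exact_mod_cast hk
    have hw' : (w : ℤ) = (t : ℤ) + (k : ℤ) := by exact_mod_cast hwt
    omega
  have hbad : ((t : ℤ) + 1) ^ l ≤ sObj n M l cstar := by
    have hmem : (m1, m2) ∈ univ.filter (fun p : Fin M × Fin M => p.1 < p.2) := by
      simp [hlt]
    have hterm : ((t : ℤ) + 1) ^ l ≤ (∑ i, cstar m1 i * cstar m2 i) ^ l :=
      pow_le_pow_left₀ (by positivity) hinner2 l
    refine le_trans hterm ?_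
    exact Finset.single_le_sum (fun p _ => pow_nonneg (inner_nonneg hstar p.1 p.2) l) hmem
  have := hmin c hc
  unfold sObj at *
  omega
end

section
/- For positive reals α and k₁ with k₁ > 1/(2α), and any k₂ ≥ (k₁²α + k₁√(k₁²α² + 2k₁α - 1))/(2k₁α - 1), it holds that 4k₁²α/(2k₁α - 1) ≤ 4k₂²α/(2k₂α + 1). -/
/-- For positive reals `α` and `k₁` with `k₁ > 1/(2α)`, and any
`k₂ ≥ (k₁²α + k₁√(k₁²α² + 2k₁α - 1))/(2k₁α - 1)`, we have
`4k₁²α/(2k₁α - 1) ≤ 4k₂²α/(2k₂α + 1)`. -/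
theorem k2_bound (α k₁ k₂ : ℝ) (hα : 0 < α) (hk₁pos : 0 < k₁) (hk₁ : 1 / (2 * α) < k₁)
    (hk₂ : (k₁ ^ 2 * α + k₁ * Real.sqrt (k₁ ^ 2 * α ^ 2 + 2 * k₁ * α - 1)) / (2 * k₁ * α - 1)
      ≤ k₂) :
    4 * k₁ ^ 2 * α / (2 * k₁ * α - 1) ≤ 4 * k₂ ^ 2 * α / (2 * k₂ * α + 1) := by
  have hD : 0 < 2 * k₁ * α - 1 := by
    have := (div_lt_iff₀ (by positivity : (0:ℝ) < 2 * α)).mp hk₁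
    nlinarith
  set s := Real.sqrt (k₁ ^ 2 * α ^ 2 + 2 * k₁ * α - 1) with hsdef
  have harg : 0 ≤ k₁ ^ 2 * α ^ 2 + 2 * k₁ * α - 1 := by nlinarith [sq_nonneg (k₁ * α)]
  have hs2 : s ^ 2 = k₁ ^ 2 * α ^ 2 + 2 * k₁ * α - 1 := Real.sq_sqrt harg
  have hs0 : 0 ≤ s := Real.sqrt_nonneg _
  have hk₂' : k₁ ^ 2 * α + k₁ * s ≤ k₂ * (2 * k₁ * α - 1) :=
    (div_le_iff₀ hD).mp hk₂
  have hk₂pos : 0 < k₂ := by nlinarith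
  have key : k₁ ^ 2 * (2 * k₂ * α + 1) ≤ k₂ ^ 2 * (2 * k₁ * α - 1) := by
    nlinarith [mul_nonneg (sub_nonneg.mpr hk₂')
      (by nlinarith : 0 ≤ k₂ * (2 * k₁ * α - 1) - (k₁ ^ 2 * α - k₁ * s))]
  rw [div_le_div_iff₀ hD (by positivity)]
  nlinarith
end

section
/- For a fixed real α > 0, the function k₁ ↦ (k₁²α + k₁√(k₁²α² + 2k₁α - 1))/(2k₁α - 1) on the domain k₁ > 1/(2α) attains its minimum value (1 + √2)/α at k₁ = 1/α. -/
/-! In the variable `x = k₁α` the expression is `g(x)/α` with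
`g(x) = (x² + x√(x² + 2x - 1))/(2x - 1)`, so it suffices to show `1 + √2 ≤ g(x)` for `x > 1/2`,
with equality at `x = 1`. Writing `c = 1 + √2`, so that `c² = 1 + 2c`, one has the identity
`(x√(x² + 2x - 1))² - (c(2x - 1) - x²)² = c²(x - 1)²(2x - 1) ≥ 0`,
hence `c(2x - 1) - x² ≤ x√(x² + 2x - 1)`, which is `c ≤ g(x)`. -/

open Real

noncomputable def normalizedBound (x : ℝ) : ℝ :=
  (x ^ 2 + x * √(x ^ 2 + 2 * x - 1)) / (2 * x - 1)

lemma one_add_sqrt_two_mul_le {x : ℝ} (hx : 1 / 2 < x) :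
    (1 + √2) * (2 * x - 1) ≤ x ^ 2 + x * √(x ^ 2 + 2 * x - 1) := by
  have hsqrt2 : √2 ^ 2 = 2 := sq_sqrt zero_le_two
  have hrad : √(x ^ 2 + 2 * x - 1) ^ 2 = x ^ 2 + 2 * x - 1 := sq_sqrt (by nlinarith)
  have hgap : (x * √(x ^ 2 + 2 * x - 1)) ^ 2 - ((1 + √2) * (2 * x - 1) - x ^ 2) ^ 2 =
      (1 + √2) ^ 2 * (x - 1) ^ 2 * (2 * x - 1) := by
    linear_combination x ^ 2 * hrad - x ^ 2 * (2 * x - 1) * hsqrt2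
  have hsq : ((1 + √2) * (2 * x - 1) - x ^ 2) ^ 2 ≤ (x * √(x ^ 2 + 2 * x - 1)) ^ 2 := by
    have : 0 ≤ (1 + √2) ^ 2 * (x - 1) ^ 2 * (2 * x - 1) := by
      have : 0 ≤ 2 * x - 1 := by linarith
      positivity
    linarith
  have hle := (le_abs_self _).trans (abs_le_of_sq_le_sq hsq (by positivity))
  linarith

lemma one_add_sqrt_two_le_normalizedBound {x : ℝ} (hx : 1 / 2 < x) :
    1 + √2 ≤ normalizedBound x :=
  (le_div_iff₀ (by linarith)).2 (one_add_sqrt_two_mul_le hx)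

lemma normalizedBound_one : normalizedBound 1 = 1 + √2 := by
  norm_num [normalizedBound]

lemma bound_eq_normalizedBound_div {k α : ℝ} (hα : α ≠ 0) :
    (k ^ 2 * α + k * √(k ^ 2 * α ^ 2 + 2 * k * α - 1)) / (2 * k * α - 1) =
      normalizedBound (k * α) / α := by
  rw [normalizedBound, div_right_comm]
  congr 1
  · field_simp
  · ring

/-- For fixed `α > 0`, the function
`k₁ ↦ (k₁²α + k₁√(k₁²α² + 2k₁α - 1))/(2k₁α - 1)` on the domain `k₁ > 1/(2α)` attains its
minimum value `(1 + √2)/α` at `k₁ = 1/α`. -/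
theorem min_of_k2_lower_bound (α : ℝ) (hα : 0 < α) :
    (∀ k₁ : ℝ, 1 / (2 * α) < k₁ →
      (1 + Real.sqrt 2) / α ≤
        (k₁ ^ 2 * α + k₁ * Real.sqrt (k₁ ^ 2 * α ^ 2 + 2 * k₁ * α - 1)) / (2 * k₁ * α - 1)) ∧
    ((1 / α) ^ 2 * α + (1 / α) * Real.sqrt ((1 / α) ^ 2 * α ^ 2 + 2 * (1 / α) * α - 1))
        / (2 * (1 / α) * α - 1) = (1 + Real.sqrt 2) / α := by
  refine ⟨fun k₁ hk₁ => ?_, ?_⟩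
  · have hx : 1 / 2 < k₁ * α := by
      rw [div_lt_iff₀ (by positivity)] at hk₁
      linarith
    rw [bound_eq_normalizedBound_div hα.ne']
    exact div_le_div_of_nonneg_right (one_add_sqrt_two_le_normalizedBound hx) hα.le
  · rw [bound_eq_normalizedBound_div hα.ne', one_div_mul_cancel hα.ne', normalizedBound_one]
end
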